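/- arXiv:2205.01808 — 3 statements merged into one kernel-verified Lean document; each statement's English description precedes it below -/
import Mathlib

section
/- Assume λ < 0 and μ > 0. Let v₁ ≠ v₂ in ℝ², let w₂ lie on the closed segment [v₁, v₂], and let w₁ ∈ C_A(v₁, v₂) with w₁ ≠ w₂. Let σ ∈ [0, π] be the angle between v₁ − v₂ and w₁ − w₂, i.e. w₁ − w₂ = (|w₁ − w₂|/|v₁ − v₂|) R_σ(v₁ − v₂), where R_σ denotes counterclockwise rotation by σ. Then φ_A(s, w₁, w₂) ∈ C_A(v₁, v₂) for every s ∈ [0, (π − σ)/μ]. -/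
noncomputable section

open Real Set RealInnerProductSpace

/-- The Euclidean plane. -/
abbrev E2 : Type := EuclideanSpace ℝ (Fin 2)

/-- The vector `(a, b)` in the Euclidean plane. -/
def vec2 (a b : ℝ) : E2 := WithLp.toLp 2 ![a, b]

/-- Counterclockwise rotation of angle `φ`. -/
def rotMap (φ : ℝ) (v : E2) : E2 :=
  vec2 (Real.cos φ * v 0 - Real.sin φ * v 1) (Real.sin φ * v 0 + Real.cos φ * v 1)

/-- `θ`, the counterclockwise rotation by `π/2`. -/
def thetaMap (v : E2) : E2 := vec2 (-(v 1)) (v 0)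

/-- The linear map with matrix `A = ((l, -m), (m, l))`. -/
def Amap (l m : ℝ) (v : E2) : E2 := vec2 (l * v 0 - m * v 1) (m * v 0 + l * v 1)

/-- The inverse `A⁻¹` of the matrix `A = ((l, -m), (m, l))` (with `det A = l² + m² ≠ 0`). -/
def AinvMap (l m : ℝ) (v : E2) : E2 :=
  (1 / (l ^ 2 + m ^ 2)) • vec2 (l * v 0 + m * v 1) (-m * v 0 + l * v 1)

/-- The matrix exponential `e^{τA} = e^{τl} R_{τm}` for `A = ((l, -m), (m, l))`. -/
def expA (l m τ : ℝ) (v : E2) : E2 := Real.exp (τ * l) • rotMap (τ * m) v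

/-- The equilibrium `v(u) = -u A⁻¹ η`. -/
def equil (l m : ℝ) (η : E2) (u : ℝ) : E2 := (-u) • AinvMap l m η

/-- The solution `φ(s, v, u) = e^{sA}(v - v(u)) + v(u)` of `ẋ = Ax + uη` for constant control. -/
def phi (l m : ℝ) (η : E2) (s : ℝ) (v : E2) (u : ℝ) : E2 :=
  expA l m s (v - equil l m η u) + equil l m η u

/-- The spiral `φ_A(τ, v₁, v₂) = e^{τA}(v₁ - v₂) + v₂`. -/
def phiA (l m : ℝ) (τ : ℝ) (v₁ v₂ : E2) : E2 := expA l m τ (v₁ - v₂) + v₂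

/-- The region `C_A(v₁, v₂)`. -/
def CA (l m : ℝ) (v₁ v₂ : E2) : Set E2 :=
  {v | 0 ≤ ⟪v - v₂, thetaMap (v₁ - v₂)⟫ ∧
    ∀ τ ∈ Icc (0 : ℝ) (π / m),
      0 ≤ ⟪v - phiA l m τ v₁ v₂, thetaMap (Amap l m (expA l m τ (v₁ - v₂)))⟫}

/-- Concatenated solution associated to a finite list of (time, control) pairs. -/
def trajComp (l m : ℝ) (η : E2) : E2 → List (ℝ × ℝ) → E2
  | v, [] => v
  | v, p :: rest => trajComp l m η (phi l m η p.1 v p.2) rest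

/-- The forward reachable set `R⁺(v)`. -/
def ReachPlus (l m : ℝ) (η : E2) (Ω : Set ℝ) (v : E2) : Set E2 :=
  {w | ∃ L : List (ℝ × ℝ), (∀ p ∈ L, 0 ≤ p.1 ∧ p.2 ∈ Ω) ∧ w = trajComp l m η v L}

/-- The backward reachable set `R⁻(v)` (forward reachable set of the time-reversed system). -/
def ReachMinus (l m : ℝ) (η : E2) (Ω : Set ℝ) (v : E2) : Set E2 :=
  {w | ∃ L : List (ℝ × ℝ), (∀ p ∈ L, p.1 ≤ 0 ∧ p.2 ∈ Ω) ∧ w = trajComp l m η v L}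

/-- An admissible trajectory of the system starting at `v`. -/
def IsAdmissibleTraj (l m : ℝ) (η : E2) (Ω : Set ℝ) (v : E2) (x : ℝ → E2) : Prop :=
  x 0 = v ∧
  ∃ t : ℕ → ℝ, t 0 = 0 ∧ StrictMono t ∧ (∀ M : ℝ, ∃ n, M < t n) ∧
    ∃ u : ℕ → ℝ, (∀ k, u k ∈ Ω) ∧
      ∀ k, ∀ s ∈ Icc (t k) (t (k + 1)), x s = phi l m η (s - t k) (x (t k)) (u k)

/-- An admissible trajectory of the time-reversed system starting at `v`. -/
def IsAdmissibleTrajRev (l m : ℝ) (η : E2) (Ω : Set ℝ) (v : E2) (x : ℝ → E2) : Prop :=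
  x 0 = v ∧
  ∃ t : ℕ → ℝ, t 0 = 0 ∧ StrictMono t ∧ (∀ M : ℝ, ∃ n, M < t n) ∧
    ∃ u : ℕ → ℝ, (∀ k, u k ∈ Ω) ∧
      ∀ k, ∀ s ∈ Icc (t k) (t (k + 1)), x s = phi l m η (-(s - t k)) (x (t k)) (u k)

/-- Conditions (a) and (b) of the definition of a control set. -/
def ControlSetAxioms (l m : ℝ) (η : E2) (Ω : Set ℝ) (D : Set E2) : Prop :=
  (∀ v ∈ D, ∃ x : ℝ → E2, IsAdmissibleTraj l m η Ω v x ∧ ∀ s : ℝ, 0 ≤ s → x s ∈ D) ∧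
  ∀ v ∈ D, D ⊆ closure (ReachPlus l m η Ω v)

/-- A control set: a set satisfying (a) and (b), maximal with respect to set inclusion. -/
def IsControlSet (l m : ℝ) (η : E2) (Ω : Set ℝ) (D : Set E2) : Prop :=
  ControlSetAxioms l m η Ω D ∧
    ∀ D' : Set E2, ControlSetAxioms l m η Ω D' → D ⊆ D' → D' = D

/-- Conditions (a) and (b) of the definition of a control set of the time-reversed system. -/
def ControlSetAxiomsRev (l m : ℝ) (η : E2) (Ω : Set ℝ) (D : Set E2) : Prop :=
  (∀ v ∈ D, ∃ x : ℝ → E2, IsAdmissibleTrajRev l m η Ω v x ∧ ∀ s : ℝ, 0 ≤ s → x s ∈ D) ∧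
  ∀ v ∈ D, D ⊆ closure (ReachMinus l m η Ω v)

/-- A control set of the time-reversed system. -/
def IsControlSetRev (l m : ℝ) (η : E2) (Ω : Set ℝ) (D : Set E2) : Prop :=
  ControlSetAxiomsRev l m η Ω D ∧
    ∀ D' : Set E2, ControlSetAxiomsRev l m η Ω D' → D ⊆ D' → D' = D

/-- `ρ = e^{πλ/μ}`. -/
def rho (l m : ℝ) : ℝ := Real.exp (π * l / m)

/-- The point `P⁺ = ((-u⁺ + ρ u⁻)/(1 - ρ)) A⁻¹ η`. -/
def Pplus (l m : ℝ) (η : E2) (um up : ℝ) : E2 :=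
  ((-up + rho l m * um) / (1 - rho l m)) • AinvMap l m η

/-- The point `P⁻ = ((-u⁻ + ρ u⁺)/(1 - ρ)) A⁻¹ η`. -/
def Pminus (l m : ℝ) (η : E2) (um up : ℝ) : E2 :=
  ((-um + rho l m * up) / (1 - rho l m)) • AinvMap l m η

/-- The region `C = C_A(P⁺, v(u⁻)) ∪ C_A(P⁻, v(u⁺))`. -/
def regionC (l m : ℝ) (η : E2) (um up : ℝ) : Set E2 :=
  CA l m (Pplus l m η um up) (equil l m η um) ∪ CA l m (Pminus l m η um up) (equil l m η up)

/-- The sequence `P₀ = v(u⁺)`, `P_{2n+1} = φ(π/μ, P_{2n}, u⁻)`, `P_{2n+2} = φ(π/μ, P_{2n+1}, u⁺)`. -/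
def Pseq (l m : ℝ) (η : E2) (um up : ℝ) : ℕ → E2
  | 0 => equil l m η up
  | n + 1 => phi l m η (π / m) (Pseq l m η um up n) (if n % 2 = 0 then um else up)

/-- The periodic orbit `O`. -/
def orbitO (l m : ℝ) (η : E2) (um up : ℝ) : Set E2 :=
  (fun s => phi l m η s (Pplus l m η um up) um) '' Icc (0 : ℝ) (π / m) ∪
    (fun s => phi l m η s (Pminus l m η um up) up) '' Icc (0 : ℝ) (π / m)

/-!
Write `d = v₁ - v₂`, `w₂ = v₂ + t d` with `t ∈ [0, 1]` and `w₁ = w₂ + c R_σ d` with `c ≥ 0`.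
In these coordinates every defining inequality of `C_A(v₁, v₂)` at `φ_A(s, w₁, w₂)` becomes an
explicit trigonometric inequality in `(s, τ)`, and the hypothesis `w₁ ∈ C_A(v₁, v₂)` is its
instance `s = 0`. The case `s = 0` propagates to all admissible `(s, τ)` because
`u ↦ e^{ul} (l sin(um + φ) - m cos(um + φ))` has derivative `(l² + m²) e^{ul} sin(um + φ)`,
hence increases as long as `sin(um + φ) ≥ 0`: for `s ≤ τ` one compares `(s, τ)` with
`(0, τ - s)`, and for `τ ≤ s` one compares `(s, τ)` with `(τ, τ)`.
-/

section Trigonometry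

variable (l m φ : ℝ)

theorem hasDerivAt_exp_mul_sin_sub_cos (u : ℝ) :
    HasDerivAt (fun u => exp (u * l) * (l * sin (u * m + φ) - m * cos (u * m + φ)))
      (exp (u * l) * ((l ^ 2 + m ^ 2) * sin (u * m + φ))) u := by
  have harg : HasDerivAt (fun u : ℝ => u * m + φ) m u := (hasDerivAt_mul_const m).add_const φ
  have h := (hasDerivAt_mul_const l).exp.mul
    ((harg.sin.const_mul l).sub (harg.cos.const_mul m))
  refine h.congr_deriv ?_
  simp only [Pi.sub_apply]
  ring

theorem exp_mul_sin_sub_cos_le {x y : ℝ} (hxy : x ≤ y)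
    (hsin : ∀ u ∈ Icc x y, 0 ≤ sin (u * m + φ)) :
    exp (x * l) * (l * sin (x * m + φ) - m * cos (x * m + φ)) ≤
      exp (y * l) * (l * sin (y * m + φ) - m * cos (y * m + φ)) := by
  have hderiv := hasDerivAt_exp_mul_sin_sub_cos l m φ
  refine monotoneOn_of_deriv_nonneg (convex_Icc x y)
    (fun u _ => (hderiv u).continuousAt.continuousWithinAt)
    (fun u _ => (hderiv u).differentiableAt.differentiableWithinAt) (fun u hu => ?_)
    (left_mem_Icc.2 hxy) (right_mem_Icc.2 hxy) hxy
  rw [interior_Icc] at hu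
  rw [(hderiv u).deriv]
  have := hsin u (Ioo_subset_Icc_self hu)
  positivity

end Trigonometry

section TangentGap

variable (l m σ t c : ℝ)

/-- `⟪φ_A(s, w₁, w₂) - φ_A(τ, v₁, v₂), θ A e^{τA} d⟫ / (e^{τl} ‖d‖²)` for
`d = v₁ - v₂`, `w₂ = v₂ + t d` and `w₁ = w₂ + c R_σ d`. -/
def tangentGap (s τ : ℝ) : ℝ :=
  c * (exp (s * l) * (l * sin (s * m + (σ - τ * m)) - m * cos (s * m + (σ - τ * m))))
    - t * (l * sin (τ * m) + m * cos (τ * m)) + m * exp (τ * l)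

variable {l m σ t c}

theorem tangentGap_nonneg_of_le (hm : 0 < m) (ht : 0 ≤ t)
    (h₀ : ∀ τ ∈ Icc 0 (π / m), 0 ≤ tangentGap l m σ t c 0 τ)
    {s τ : ℝ} (hs : 0 ≤ s) (hsτ : s ≤ τ) (hτ : τ ≤ π / m) :
    0 ≤ tangentGap l m σ t c s τ := by
  have hτm : τ * m ≤ π := (le_div_iff₀ hm).1 hτ
  have hshift := h₀ (τ - s) ⟨by linarith, by linarith⟩
  -- `u ↦ e^{ul} (l sin((τ - u) m) + m cos((τ - u) m))` increases on `[0, τ]`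
  have hmono := exp_mul_sin_sub_cos_le l (-m) (τ * m) hs fun u hu =>
    sin_nonneg_of_nonneg_of_le_pi (by nlinarith [hu.2]) (by nlinarith [hu.1])
  have hexp : exp (s * l) * exp ((τ - s) * l) = exp (τ * l) := by
    rw [← exp_add]; ring_nf
  simp only [tangentGap, zero_mul, exp_zero, one_mul, zero_add] at hshift ⊢
  rw [show s * m + (σ - τ * m) = σ - (τ - s) * m by ring]
  simp only [zero_mul, neg_zero, zero_add, exp_zero, one_mul, mul_neg,
    show -(s * m) + τ * m = (τ - s) * m by ring] at hmono
  rw [← hexp]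
  nlinarith [mul_nonneg (exp_pos (s * l)).le hshift, mul_le_mul_of_nonneg_left hmono ht]

theorem tangentGap_nonneg (hm : 0 < m) (hσ : 0 ≤ σ) (ht : 0 ≤ t) (hc : 0 ≤ c)
    (h₀ : ∀ τ ∈ Icc 0 (π / m), 0 ≤ tangentGap l m σ t c 0 τ)
    {s τ : ℝ} (hs : s ∈ Icc 0 ((π - σ) / m)) (hτ : τ ∈ Icc 0 (π / m)) :
    0 ≤ tangentGap l m σ t c s τ := by
  rcases le_total s τ with hsτ | hτs
  · exact tangentGap_nonneg_of_le hm ht h₀ hs.1 hsτ hτ.2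
  have hsm : s * m ≤ π - σ := (le_div_iff₀ hm).1 hs.2
  have hdiag := tangentGap_nonneg_of_le hm ht h₀ hτ.1 le_rfl hτ.2
  have hmono := exp_mul_sin_sub_cos_le l m (σ - τ * m) hτs fun u hu =>
    sin_nonneg_of_nonneg_of_le_pi
      (by nlinarith [mul_le_mul_of_nonneg_right hu.1 hm.le])
      (by nlinarith [mul_le_mul_of_nonneg_right hu.2 hm.le, mul_nonneg hτ.1 hm.le])
  unfold tangentGap at hdiag ⊢
  nlinarith [mul_le_mul_of_nonneg_left hmono hc]

end TangentGap

theorem phiA_zero (l m : ℝ) (v₁ v₂ : E2) : phiA l m 0 v₁ v₂ = v₁ := by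
  ext i
  fin_cases i <;> simp [phiA, expA, rotMap, vec2]

theorem inner_phiA_sub_thetaMap (l m σ t c s : ℝ) (v₁ v₂ : E2) :
    ⟪phiA l m s (v₂ + t • (v₁ - v₂) + c • rotMap σ (v₁ - v₂)) (v₂ + t • (v₁ - v₂)) - v₂,
      thetaMap (v₁ - v₂)⟫ = ‖v₁ - v₂‖ ^ 2 * (exp (s * l) * (c * sin (s * m + σ))) := by
  rw [← real_inner_self_eq_norm_sq]
  simp [phiA, expA, rotMap, thetaMap, vec2, PiLp.inner_apply, Fin.sum_univ_two, sin_add,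
    EuclideanSpace.real_norm_sq_eq]
  ring

theorem inner_phiA_sub_phiA (l m σ t c s τ : ℝ) (v₁ v₂ : E2) :
    ⟪phiA l m s (v₂ + t • (v₁ - v₂) + c • rotMap σ (v₁ - v₂)) (v₂ + t • (v₁ - v₂)) -
        phiA l m τ v₁ v₂, thetaMap (Amap l m (expA l m τ (v₁ - v₂)))⟫ =
      ‖v₁ - v₂‖ ^ 2 * (exp (τ * l) * tangentGap l m σ t c s τ) := by
  rw [← real_inner_self_eq_norm_sq]
  simp only [tangentGap, phiA, expA, rotMap, thetaMap, Amap, vec2, PiLp.inner_apply,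
    Fin.sum_univ_two, PiLp.add_apply, PiLp.sub_apply, PiLp.smul_apply, smul_eq_mul,
    Matrix.cons_val_zero, Matrix.cons_val_one, RCLike.inner_apply,
    conj_trivial, sin_add, cos_add, sin_sub, cos_sub]
  linear_combination (sin_sq_add_cos_sq (τ * m)) *
    (m * exp (τ * l) ^ 2 * ((v₁ 0 - v₂ 0) ^ 2 + (v₁ 1 - v₂ 1) ^ 2))

theorem phiA_mem_CA_iff {l m : ℝ} (σ t c s : ℝ) {v₁ v₂ : E2} (hv : v₁ ≠ v₂) :
    phiA l m s (v₂ + t • (v₁ - v₂) + c • rotMap σ (v₁ - v₂)) (v₂ + t • (v₁ - v₂)) ∈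
        CA l m v₁ v₂ ↔
      0 ≤ c * sin (s * m + σ) ∧ ∀ τ ∈ Icc 0 (π / m), 0 ≤ tangentGap l m σ t c s τ := by
  have hd : 0 < ‖v₁ - v₂‖ ^ 2 := by
    have := norm_pos_iff.2 (sub_ne_zero.2 hv)
    positivity
  simp only [CA, mem_ofPred_eq, inner_phiA_sub_thetaMap, inner_phiA_sub_phiA,
    mul_nonneg_iff_of_pos_left hd, mul_nonneg_iff_of_pos_left (exp_pos _)]

theorem stmt0_general (l m : ℝ) (hm : 0 < m) (v₁ v₂ w₁ w₂ : E2) (hv : v₁ ≠ v₂)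
    (hw₂ : w₂ ∈ segment ℝ v₁ v₂) (hw₁ : w₁ ∈ CA l m v₁ v₂)
    (σ : ℝ) (hσ : σ ∈ Icc (0 : ℝ) π)
    (hangle : w₁ - w₂ = (‖w₁ - w₂‖ / ‖v₁ - v₂‖) • rotMap σ (v₁ - v₂)) :
    ∀ s ∈ Icc (0 : ℝ) ((π - σ) / m), phiA l m s w₁ w₂ ∈ CA l m v₁ v₂ := by
  rw [segment_symm, segment_eq_image'] at hw₂
  obtain ⟨t, ht, rfl⟩ := hw₂
  obtain ⟨c, hc, rfl⟩ : ∃ c ≥ 0, w₁ = v₂ + t • (v₁ - v₂) + c • rotMap σ (v₁ - v₂) :=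
    ⟨_, by positivity, sub_eq_iff_eq_add'.1 hangle⟩
  rw [← phiA_zero l m (_ + c • _), phiA_mem_CA_iff σ t c 0 hv] at hw₁
  intro s hs
  have hsm : s * m ≤ π - σ := (le_div_iff₀ hm).1 hs.2
  rw [phiA_mem_CA_iff σ t c s hv]
  exact ⟨mul_nonneg hc (sin_nonneg_of_nonneg_of_le_pi (by nlinarith [hs.1, hσ.1]) (by linarith)),
    fun τ hτ => tangentGap_nonneg hm hσ.1 ht.1 hc hw₁.2 hs hτ⟩

/-- invariance of the region `C_A(v₁, v₂)` (Proposition 1 of the paper). -/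
theorem stmt0 (l m : ℝ) (hl : l < 0) (hm : 0 < m) (v₁ v₂ w₁ w₂ : E2) (hv : v₁ ≠ v₂)
    (hw₂ : w₂ ∈ segment ℝ v₁ v₂) (hw₁ : w₁ ∈ CA l m v₁ v₂) (hw : w₁ ≠ w₂)
    (σ : ℝ) (hσ : σ ∈ Icc (0 : ℝ) π)
    (hangle : w₁ - w₂ = (‖w₁ - w₂‖ / ‖v₁ - v₂‖) • rotMap σ (v₁ - v₂)) :
    ∀ s ∈ Icc (0 : ℝ) ((π - σ) / m), phiA l m s w₁ w₂ ∈ CA l m v₁ v₂ :=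
  stmt0_general l m hm v₁ v₂ w₁ w₂ hv hw₂ hw₁ σ hσ hangle
end
end

section
/- Let v₁ ≠ 0 in ℝ², let w₂ = t v₁ with 0 < t < 1, let w₁ ≠ w₂, and let σ ∈ [0, π] satisfy w₁ − w₂ = (|w₁ − w₂|/|v₁|) R_σ v₁, where R_σ is counterclockwise rotation by σ. Then for every s ∈ ℝ, ⟨φ_A(s, w₁, w₂), θ v₁⟩ = e^{sλ} |w₁ − w₂| |v₁| sin(μs + σ); in particular ⟨φ_A(s, w₁, w₂), θ v₁⟩ ≥ 0 for all s ∈ [0, (π − σ)/μ]. -/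
noncomputable section

open Real Set RealInnerProductSpace

@[simp] lemma vec2_zero (a b : ℝ) : vec2 a b 0 = a := rfl

@[simp] lemma vec2_one (a b : ℝ) : vec2 a b 1 = b := rfl

lemma E2.inner_eq (x y : E2) : ⟪x, y⟫ = x 0 * y 0 + x 1 * y 1 := by
  simp [PiLp.inner_apply, Fin.sum_univ_two, mul_comm]

lemma E2.norm_sq_eq (v : E2) : ‖v‖ ^ 2 = v 0 ^ 2 + v 1 ^ 2 := by
  simp [EuclideanSpace.norm_sq_eq, Fin.sum_univ_two]

lemma rotMap_smul (φ c : ℝ) (v : E2) : rotMap φ (c • v) = c • rotMap φ v := by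
  ext i; fin_cases i <;> simp [rotMap] <;> ring

lemma rotMap_rotMap (a b : ℝ) (v : E2) : rotMap a (rotMap b v) = rotMap (a + b) v := by
  ext i; fin_cases i <;> simp [rotMap, cos_add, sin_add] <;> ring

lemma inner_thetaMap_self (v : E2) : ⟪v, thetaMap v⟫ = 0 := by
  simp [E2.inner_eq, thetaMap]; ring

lemma inner_rotMap_thetaMap (φ : ℝ) (v : E2) : ⟪rotMap φ v, thetaMap v⟫ = ‖v‖ ^ 2 * sin φ := by
  simp [E2.inner_eq, E2.norm_sq_eq, rotMap, thetaMap]; ring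

lemma expA_smul_rotMap (l m τ c σ : ℝ) (v : E2) :
    expA l m τ (c • rotMap σ v) = (exp (τ * l) * c) • rotMap (τ * m + σ) v := by
  rw [expA, rotMap_smul, rotMap_rotMap, smul_smul]

lemma inner_phiA_thetaMap (l m τ c σ t : ℝ) (v w₁ w₂ : E2) (hw₂ : w₂ = t • v)
    (hangle : w₁ - w₂ = c • rotMap σ v) :
    ⟪phiA l m τ w₁ w₂, thetaMap v⟫ = exp (τ * l) * c * ‖v‖ ^ 2 * sin (τ * m + σ) := by
  rw [phiA, hangle, expA_smul_rotMap, inner_add_left, inner_smul_left, inner_rotMap_thetaMap,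
    hw₂, inner_smul_left, inner_thetaMap_self]
  simp only [conj_trivial]
  ring

theorem stmt1_general (l m : ℝ) (hm : 0 < m) (v₁ w₁ w₂ : E2)
    (t : ℝ) (hw₂ : w₂ = t • v₁)
    (σ : ℝ) (hσ : σ ∈ Icc (0 : ℝ) π)
    (hangle : w₁ - w₂ = (‖w₁ - w₂‖ / ‖v₁‖) • rotMap σ v₁) :
    (∀ s : ℝ, ⟪phiA l m s w₁ w₂, thetaMap v₁⟫ =
      Real.exp (s * l) * ‖w₁ - w₂‖ * ‖v₁‖ * Real.sin (m * s + σ)) ∧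
    ∀ s ∈ Icc (0 : ℝ) ((π - σ) / m), 0 ≤ ⟪phiA l m s w₁ w₂, thetaMap v₁⟫ := by
  have formula (s : ℝ) : ⟪phiA l m s w₁ w₂, thetaMap v₁⟫ =
      Real.exp (s * l) * ‖w₁ - w₂‖ * ‖v₁‖ * Real.sin (m * s + σ) := by
    rw [inner_phiA_thetaMap l m s _ σ t v₁ w₁ w₂ hw₂ hangle, mul_comm s m]
    rcases eq_or_ne ‖v₁‖ 0 with h | h
    · simp [h]
    · field_simp
  refine ⟨formula, fun s ⟨hs0, hs⟩ => ?_⟩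
  rw [le_div_iff₀ hm] at hs
  rw [formula]
  have hsin : 0 ≤ sin (m * s + σ) :=
    sin_nonneg_of_nonneg_of_le_pi (by nlinarith [hσ.1]) (by linarith)
  positivity

/-- the inner product `⟪φ_A(s, w₁, w₂), θ v₁⟫` is
`e^{sλ} |w₁ - w₂| |v₁| sin(μ s + σ)`, nonnegative for `s ∈ [0, (π - σ)/μ]`. -/
theorem stmt1 (l m : ℝ) (hm : 0 < m) (v₁ w₁ w₂ : E2) (hv : v₁ ≠ 0)
    (t : ℝ) (ht0 : 0 < t) (ht1 : t < 1) (hw₂ : w₂ = t • v₁) (hw : w₁ ≠ w₂)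
    (σ : ℝ) (hσ : σ ∈ Icc (0 : ℝ) π)
    (hangle : w₁ - w₂ = (‖w₁ - w₂‖ / ‖v₁‖) • rotMap σ v₁) :
    (∀ s : ℝ, ⟪phiA l m s w₁ w₂, thetaMap v₁⟫ =
      Real.exp (s * l) * ‖w₁ - w₂‖ * ‖v₁‖ * Real.sin (m * s + σ)) ∧
    ∀ s ∈ Icc (0 : ℝ) ((π - σ) / m), 0 ≤ ⟪phiA l m s w₁ w₂, thetaMap v₁⟫ :=
  stmt1_general l m hm v₁ w₁ w₂ t hw₂ σ hσ hangle
end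
end

section
/- Assume λ < 0 and μ > 0, and set ρ := e^{πλ/μ}. Define recursively P₀ := v(u⁺), P_{2n+1} := φ(π/μ, P_{2n}, u⁻), and P_{2n+2} := φ(π/μ, P_{2n+1}, u⁺). Then for all n ≥ 1, P_{2n} = −ρ(Σ_{j=0}^{2n−1} ρ^j) v(u⁻) + (Σ_{j=0}^{2n} ρ^j) v(u⁺), and for all n ≥ 0, P_{2n+1} = (Σ_{j=0}^{2n+1} ρ^j) v(u⁻) − ρ(Σ_{j=0}^{2n} ρ^j) v(u⁺). -/
noncomputable section

open Real Set RealInnerProductSpace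

/-
Since `e^{(π/μ)A} = -ρ·Id`, a half-turn with constant control `u` is the affine map
`v ↦ -ρ v + (1 + ρ) v(u)`. Starting from `P₀ = v(u⁺)` and alternating `u⁻`, `u⁺`, the coefficients
of `v(u⁻)` and `v(u⁺)` are partial geometric sums, updated by `S_{k+1} = ρ S_k + 1`.
-/

lemma rotMap_pi (v : E2) : rotMap π v = -v := by
  ext i
  fin_cases i <;> simp [rotMap, vec2]

lemma expA_pi_div {l m : ℝ} (hm : m ≠ 0) (v : E2) :
    expA l m (π / m) v = (-rho l m) • v := by
  rw [expA, div_mul_cancel₀ _ hm, rotMap_pi, rho, div_mul_eq_mul_div, smul_neg, neg_smul]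

lemma phi_pi_div {l m : ℝ} (hm : m ≠ 0) (η v : E2) (u : ℝ) :
    phi l m η (π / m) v u = (-rho l m) • v + (1 + rho l m) • equil l m η u := by
  rw [phi, expA_pi_div hm]
  module

section Pseq

variable {l m : ℝ} (hm : m ≠ 0) (η : E2) (um up : ℝ)
include hm

lemma Pseq_two_mul_add_one (n : ℕ) :
    Pseq l m η um up (2 * n + 1) =
      (-rho l m) • Pseq l m η um up (2 * n) + (1 + rho l m) • equil l m η um := by
  rw [Pseq, if_pos (by omega), phi_pi_div hm]

lemma Pseq_two_mul_add_two (n : ℕ) :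
    Pseq l m η um up (2 * n + 2) =
      (-rho l m) • Pseq l m η um up (2 * n + 1) + (1 + rho l m) • equil l m η up := by
  rw [Pseq, if_neg (by omega), phi_pi_div hm]

lemma Pseq_two_mul_add_one_eq_of_two_mul {n : ℕ}
    (h : Pseq l m η um up (2 * n) =
      (-(rho l m * ∑ j ∈ Finset.range (2 * n), rho l m ^ j)) • equil l m η um +
        (∑ j ∈ Finset.range (2 * n + 1), rho l m ^ j) • equil l m η up) :
    Pseq l m η um up (2 * n + 1) =
      (∑ j ∈ Finset.range (2 * n + 2), rho l m ^ j) • equil l m η um +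
        (-(rho l m * ∑ j ∈ Finset.range (2 * n + 1), rho l m ^ j)) • equil l m η up := by
  rw [Pseq_two_mul_add_one hm, h, geom_sum_succ (n := 2 * n + 1), geom_sum_succ (n := 2 * n)]
  module

lemma Pseq_two_mul (n : ℕ) :
    Pseq l m η um up (2 * n) =
      (-(rho l m * ∑ j ∈ Finset.range (2 * n), rho l m ^ j)) • equil l m η um +
        (∑ j ∈ Finset.range (2 * n + 1), rho l m ^ j) • equil l m η up := by
  induction n with
  | zero => simp [Pseq]
  | succ n ih =>
    rw [show 2 * (n + 1) = 2 * n + 2 by ring, Pseq_two_mul_add_two hm,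
      Pseq_two_mul_add_one_eq_of_two_mul hm η um up ih, geom_sum_succ (n := 2 * n + 2),
      geom_sum_succ (n := 2 * n + 1)]
    module

end Pseq

theorem stmt4_general (l m : ℝ) (hm : 0 < m) (η : E2)
    (um up : ℝ) :
    (∀ n : ℕ, 1 ≤ n →
      Pseq l m η um up (2 * n) =
        (-(rho l m * ∑ j ∈ Finset.range (2 * n), rho l m ^ j)) • equil l m η um +
          (∑ j ∈ Finset.range (2 * n + 1), rho l m ^ j) • equil l m η up) ∧
    ∀ n : ℕ,
      Pseq l m η um up (2 * n + 1) =
        (∑ j ∈ Finset.range (2 * n + 2), rho l m ^ j) • equil l m η um +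
          (-(rho l m * ∑ j ∈ Finset.range (2 * n + 1), rho l m ^ j)) • equil l m η up :=
  ⟨fun n _ => Pseq_two_mul hm.ne' η um up n,
    fun n => Pseq_two_mul_add_one_eq_of_two_mul hm.ne' η um up (Pseq_two_mul hm.ne' η um up n)⟩

/-- the explicit formulas for the points `P_{2n}` and `P_{2n+1}`. -/
theorem stmt4 (l m : ℝ) (hl : l < 0) (hm : 0 < m) (η : E2) (hη : η ≠ 0)
    (um up : ℝ) (hu : um < up) :
    (∀ n : ℕ, 1 ≤ n →
      Pseq l m η um up (2 * n) =
        (-(rho l m * ∑ j ∈ Finset.range (2 * n), rho l m ^ j)) • equil l m η um +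
          (∑ j ∈ Finset.range (2 * n + 1), rho l m ^ j) • equil l m η up) ∧
    ∀ n : ℕ,
      Pseq l m η um up (2 * n + 1) =
        (∑ j ∈ Finset.range (2 * n + 2), rho l m ^ j) • equil l m η um +
          (-(rho l m * ∑ j ∈ Finset.range (2 * n + 1), rho l m ^ j)) • equil l m η up :=
  stmt4_general l m hm η um up
end
end
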